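/- Fix a unit vector n ∈ ℝ^J and d ∈ ℝ^J with ⟨d, n⟩ = 1, and consider the half-space G = {x : ⟨x, n⟩ ≥ 0}. Given a continuous path f with f(0) ∈ G, the pair (h, g) defined by g(t) = (sup_{s≤t} (−⟨f(s), n⟩) ∨ 0) · d and h = f + g solves the extended Skorokhod problem {(d, n, 0)}: h(t) ∈ G for all t, h(0) = f(0), and g(t) − g(s) ∈ cone[⋃_{u∈(s,t]} d(h(u))] for all 0 ≤ s < t, where d(x) = cone{d} if ⟨x, n⟩ = 0 and {0} otherwise. -/

import Mathlib

open scoped BigOperators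

noncomputable section

/-- The convex cone generated by a set of vectors. -/
def coneHull {J : ℕ} (S : Set (EuclideanSpace ℝ (Fin J))) : Set (EuclideanSpace ℝ (Fin J)) :=
  {v | ∃ (k : ℕ) (lam : Fin k → ℝ) (w : Fin k → EuclideanSpace ℝ (Fin J)),
    (∀ j, 0 ≤ lam j) ∧ (∀ j, w j ∈ S) ∧ v = ∑ j, lam j • w j}

/-!
With `φ = -⟨f, n⟩` and the regulator `ℓ(t) = sup_{s ≤ t} φ(s) ∨ 0`, pushing `f` by `ℓ • d`
with `⟨d, n⟩ = 1` adds exactly `ℓ ≥ φ` to `⟨f, n⟩`, so `h` stays in the half-space. If `ℓ`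
increases on `(s, t]`, then `ℓ(t) = φ(u) > 0` at a maximiser `u` of `φ` on `[0, t]`, which must
lie in `(s, t]`; there `ℓ(u) = φ(u)`, i.e. `h u` is on the boundary, so the increment
`(ℓ t - ℓ s) • d` lies in the cone of active reflection directions.
-/

section ConeHull

variable {J : ℕ} {S : Set (EuclideanSpace ℝ (Fin J))}

theorem zero_mem_coneHull (S : Set (EuclideanSpace ℝ (Fin J))) : 0 ∈ coneHull S :=
  ⟨0, Fin.elim0, Fin.elim0, fun j => j.elim0, fun j => j.elim0, by simp⟩

theorem smul_mem_coneHull {c : ℝ} {v : EuclideanSpace ℝ (Fin J)} (hc : 0 ≤ c) (hv : v ∈ S) :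
    c • v ∈ coneHull S :=
  ⟨1, fun _ => c, fun _ => v, fun _ => hc, fun _ => hv, by simp⟩

end ConeHull

def skorokhodRegulator (φ : ℝ → ℝ) (t : ℝ) : ℝ :=
  max (⨆ s : Set.Icc (0 : ℝ) t, φ s.1) 0

section SkorokhodRegulator

variable {φ : ℝ → ℝ} {s t u : ℝ}

theorem skorokhodRegulator_nonneg (φ : ℝ → ℝ) (t : ℝ) : 0 ≤ skorokhodRegulator φ t :=
  le_max_right _ _

theorem bddAbove_range_Icc_of_continuous (hφ : Continuous φ) (t : ℝ) :
    BddAbove (Set.range fun s : Set.Icc (0 : ℝ) t => φ s.1) := by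
  rw [← Set.image_eq_range]
  exact (isCompact_Icc.image_of_continuousOn hφ.continuousOn).bddAbove

theorem le_skorokhodRegulator (hφ : Continuous φ) (hu : u ∈ Set.Icc 0 t) :
    φ u ≤ skorokhodRegulator φ t :=
  (le_ciSup (bddAbove_range_Icc_of_continuous hφ t) ⟨u, hu⟩).trans (le_max_left _ _)

theorem skorokhodRegulator_mono (hφ : Continuous φ) (hs : 0 ≤ s) (hst : s ≤ t) :
    skorokhodRegulator φ s ≤ skorokhodRegulator φ t := by
  have : Nonempty (Set.Icc (0 : ℝ) s) := ⟨⟨0, le_rfl, hs⟩⟩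
  refine max_le_max (ciSup_le fun u => ?_) le_rfl
  exact le_ciSup (bddAbove_range_Icc_of_continuous hφ t) ⟨u.1, u.2.1, u.2.2.trans hst⟩

theorem skorokhodRegulator_zero (hφ0 : φ 0 ≤ 0) : skorokhodRegulator φ 0 = 0 := by
  have : Nonempty (Set.Icc (0 : ℝ) 0) := ⟨⟨0, le_rfl, le_rfl⟩⟩
  refine max_eq_right (ciSup_le fun u => ?_)
  rwa [le_antisymm u.2.2 u.2.1]

theorem exists_skorokhodRegulator_eq_max (hφ : Continuous φ) (ht : 0 ≤ t) :
    ∃ u ∈ Set.Icc 0 t, skorokhodRegulator φ t = max (φ u) 0 := by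
  obtain ⟨u, hu, hmax⟩ :=
    isCompact_Icc.exists_isMaxOn (Set.nonempty_Icc.mpr ht) hφ.continuousOn
  have : Nonempty (Set.Icc (0 : ℝ) t) := ⟨⟨0, le_rfl, ht⟩⟩
  refine ⟨u, hu, congrArg (max · 0) (le_antisymm (ciSup_le fun v => hmax v.2) ?_)⟩
  exact le_ciSup (bddAbove_range_Icc_of_continuous hφ t) ⟨u, hu⟩

theorem exists_mem_Ioc_skorokhodRegulator_eq (hφ : Continuous φ) (hs : 0 ≤ s) (hst : s ≤ t)
    (hlt : skorokhodRegulator φ s < skorokhodRegulator φ t) :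
    ∃ u ∈ Set.Ioc s t, skorokhodRegulator φ u = φ u := by
  obtain ⟨u, hu, hmax⟩ := exists_skorokhodRegulator_eq_max hφ (hs.trans hst)
  have hpos : 0 < skorokhodRegulator φ t := (skorokhodRegulator_nonneg φ s).trans_lt hlt
  have htu : skorokhodRegulator φ t = φ u := by
    rw [hmax] at hpos ⊢
    exact max_eq_left (not_lt.mp fun h => hpos.ne' (max_eq_right h.le))
  have hsu : s < u := not_le.mp fun hus =>
    (le_skorokhodRegulator hφ ⟨hu.1, hus⟩).not_gt (htu ▸ hlt)
  refine ⟨u, ⟨hsu, hu.2⟩, le_antisymm ?_ (le_skorokhodRegulator hφ ⟨hu.1, le_rfl⟩)⟩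
  exact htu ▸ skorokhodRegulator_mono hφ hu.1 hu.2

end SkorokhodRegulator

theorem stmt15_general (J : ℕ) (n d : EuclideanSpace ℝ (Fin J))
    (hd : (inner ℝ d n : ℝ) = 1)
    (G : Set (EuclideanSpace ℝ (Fin J))) (hG : G = {x | 0 ≤ (inner ℝ x n : ℝ)})
    (f g h : ℝ → EuclideanSpace ℝ (Fin J)) (hf : Continuous f) (hf0 : f 0 ∈ G)
    (hgdef : ∀ t : ℝ, g t = (max (⨆ s : Set.Icc (0:ℝ) t, -(inner ℝ (f s.1) n : ℝ)) 0) • d)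
    (hhdef : ∀ t : ℝ, h t = f t + g t) :
    (∀ t : ℝ, 0 ≤ t → h t ∈ G) ∧ h 0 = f 0 ∧
      ∀ s t : ℝ, 0 ≤ s → s < t →
        g t - g s ∈ coneHull (⋃ u ∈ Set.Ioc s t,
          coneHull {v | (inner ℝ (h u) n : ℝ) = 0 ∧ v = d}) := by
  subst hG
  set φ : ℝ → ℝ := fun t => -(inner ℝ (f t) n : ℝ)
  have hφ : Continuous φ := (hf.inner continuous_const).neg
  have hg : ∀ t, g t = skorokhodRegulator φ t • d := hgdef
  have hinner : ∀ t, (inner ℝ (h t) n : ℝ) = skorokhodRegulator φ t - φ t := fun t => by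
    rw [hhdef, hg, inner_add_left, real_inner_smul_left, hd]
    ring
  refine ⟨fun t ht => ?_, ?_, fun s t hs hst => ?_⟩
  · rw [Set.mem_ofPred_eq, hinner, sub_nonneg]
    exact le_skorokhodRegulator hφ ⟨ht, le_rfl⟩
  · have hφ0 : φ 0 ≤ 0 := neg_nonpos.mpr hf0
    rw [hhdef, hg, skorokhodRegulator_zero hφ0, zero_smul, add_zero]
  rw [hg, hg, ← sub_smul]
  rcases (skorokhodRegulator_mono hφ hs hst.le).eq_or_lt with heq | hlt
  · rw [heq, sub_self, zero_smul]
    exact zero_mem_coneHull _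
  obtain ⟨u, hu, hRu⟩ := exists_mem_Ioc_skorokhodRegulator_eq hφ hs hst.le hlt
  refine smul_mem_coneHull (sub_nonneg.mpr hlt.le) (Set.mem_iUnion₂.mpr ⟨u, hu, ?_⟩)
  have hdu : d ∈ {v | (inner ℝ (h u) n : ℝ) = 0 ∧ v = d} :=
    ⟨(hinner u).trans (sub_eq_zero.mpr hRu), rfl⟩
  simpa using smul_mem_coneHull zero_le_one hdu

theorem stmt15 (J : ℕ) (n d : EuclideanSpace ℝ (Fin J)) (hn : ‖n‖ = 1)
    (hd : (inner ℝ d n : ℝ) = 1)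
    (G : Set (EuclideanSpace ℝ (Fin J))) (hG : G = {x | 0 ≤ (inner ℝ x n : ℝ)})
    (f g h : ℝ → EuclideanSpace ℝ (Fin J)) (hf : Continuous f) (hf0 : f 0 ∈ G)
    (hgdef : ∀ t : ℝ, g t = (max (⨆ s : Set.Icc (0:ℝ) t, -(inner ℝ (f s.1) n : ℝ)) 0) • d)
    (hhdef : ∀ t : ℝ, h t = f t + g t) :
    (∀ t : ℝ, 0 ≤ t → h t ∈ G) ∧ h 0 = f 0 ∧
      ∀ s t : ℝ, 0 ≤ s → s < t →
        g t - g s ∈ coneHull (⋃ u ∈ Set.Ioc s t,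
          coneHull {v | (inner ℝ (h u) n : ℝ) = 0 ∧ v = d}) :=
  stmt15_general J n d hd G hG f g h hf hf0 hgdef hhdef

end
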